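/- arXiv:2410.16554 — 2 statements merged into one kernel-verified Lean document; each statement's English description precedes it below -/
import Mathlib

section
/- Let μ, P be Borel probability measures on ℝ^d with μ absolutely continuous with respect to Lebesgue measure, and let ∂φ be the subdifferential of a lower semicontinuous convex function φ : ℝ^d → (−∞, +∞] whose gradient pushes μ forward to P. Then every u ∈ ℝ^d with TD(u; μ) > 0 lies in the interior of the domain of ∂φ (in particular ∂φ(u) ≠ ∅). -/
/-!
Subgradients exist `μ`-a.e., so the domain `D` of `∂φ` has full `μ`-measure. `D` lies between a
convex set `C` and its interior: `C` is `{φ = ⊥}` if `φ` takes the value `⊥`, and otherwise the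
effective domain `{φ < ⊤}`, at whose interior points a supporting hyperplane of the epigraph yields
a subgradient. Convex sets have Lebesgue-null frontier and `μ ≪ volume`, so `interior C` has full
`μ`-measure too. If `u ∉ interior C`, a hyperplane separating `u` from the open convex set
`interior C` cuts off a closed half-space at `u` of `μ`-measure zero, i.e. `TD(u; μ) = 0`.
-/

open scoped RealInnerProductSpace
open MeasureTheory

/-- The subdifferential of an extended-real-valued function. -/
def Subdiff {d : ℕ} (φ : EuclideanSpace ℝ (Fin d) → EReal)
    (u : EuclideanSpace ℝ (Fin d)) : Set (EuclideanSpace ℝ (Fin d)) :=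
  {p | ∀ z, φ u + ((⟪p, z - u⟫ : ℝ) : EReal) ≤ φ z}

theorem StrongDual.apply_lt_of_mem_interior {E : Type*} [NormedAddCommGroup E] [NormedSpace ℝ E]
    {f : StrongDual ℝ E} (hf : f ≠ 0) {s : Set E} {M : ℝ} (hs : ∀ a ∈ s, f a ≤ M) {x : E}
    (hx : x ∈ interior s) : f x < M := by
  have hsub : f '' interior s ⊆ Set.Iic M := by
    rintro _ ⟨a, ha, rfl⟩
    exact hs a (interior_subset ha)
  rw [← Set.mem_Iio, ← interior_Iic]
  exact interior_maximal hsub (f.isOpenMap_of_ne_zero hf _ isOpen_interior) ⟨x, hx, rfl⟩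

theorem ConvexOn.exists_dual_le_of_continuousAt {E : Type*} [NormedAddCommGroup E]
    [NormedSpace ℝ E] {s : Set E} {g : E → ℝ} {w : E} (hg : ConvexOn ℝ s g)
    (hw : w ∈ interior s) (hgw : ContinuousAt g w) :
    ∃ l : StrongDual ℝ E, ∀ z ∈ s, g w + l (z - w) ≤ g z := by
  set epi := {p : E × ℝ | p.1 ∈ s ∧ g p.1 ≤ p.2}
  have hinner : (w, g w + 1) ∈ interior epi := by
    rw [mem_interior_iff_mem_nhds]
    have hcont : ContinuousAt (fun p : E × ℝ => g p.1 - p.2) (w, g w + 1) :=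
      (hgw.comp continuousAt_fst).sub continuousAt_snd
    filter_upwards [continuousAt_fst.preimage_mem_nhds (mem_interior_iff_mem_nhds.mp hw),
      hcont.eventually (gt_mem_nhds (show g w - (g w + 1) < 0 by linarith))] with p hps hp
    exact ⟨hps, by linarith [show g p.1 - p.2 < 0 from hp]⟩
  have hbdry : (w, g w) ∉ interior epi := by
    intro h
    obtain ⟨ε, hε, hball⟩ := Metric.isOpen_iff.mp
      (isOpen_interior.preimage (Continuous.prodMk_right w)) (g w) h
    have hmem : (w, g w - ε / 2) ∈ epi :=
      interior_subset (hball (by rw [Metric.mem_ball, Real.dist_eq, abs_of_neg] <;> linarith))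
    linarith [hmem.2]
  obtain ⟨f, hf0, hf⟩ := geometric_hahn_banach_of_nonempty_interior_point hg.convex_epigraph
    hbdry ⟨_, hinner⟩
  have hsplit : ∀ z r, f (z, r) = f (z, 0) + r * f (0, 1) := by
    intro z r
    rw [← smul_eq_mul, ← map_smul, ← map_add, Prod.smul_mk, smul_zero, smul_eq_mul, mul_one,
      Prod.mk_add_mk, add_zero, zero_add]
  set c := f (0, 1)
  have hc : c < 0 := by
    have := f.apply_lt_of_mem_interior hf0 hf hinner
    rw [hsplit w (g w + 1), hsplit w (g w)] at this
    linarith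
  -- the supporting hyperplane `f = f (w, g w)` is the graph of `z ↦ g w + l (z - w)`
  refine ⟨(-c)⁻¹ • f.comp (ContinuousLinearMap.inl ℝ E ℝ), fun z hz => ?_⟩
  have hfz := hf (z, g z) ⟨hz, le_rfl⟩
  rw [hsplit z (g z), hsplit w (g w)] at hfz
  have hlin : f (z - w, 0) = f (z, 0) - f (w, 0) := by
    rw [← map_sub, Prod.mk_sub_mk, sub_zero]
  show g w + (-c)⁻¹ * f (z - w, 0) ≤ g z
  rw [hlin, ← le_sub_iff_add_le', inv_mul_le_iff₀ (by linarith)]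
  linear_combination hfz

theorem ConvexOn.exists_subgradient_of_mem_interior {E : Type*} [NormedAddCommGroup E]
    [InnerProductSpace ℝ E] [FiniteDimensional ℝ E] {s : Set E} {g : E → ℝ} {w : E}
    (hg : ConvexOn ℝ s g) (hw : w ∈ interior s) :
    ∃ p : E, ∀ z ∈ s, g w + ⟪p, z - w⟫ ≤ g z := by
  obtain ⟨l, hl⟩ := hg.exists_dual_le_of_continuousAt hw
    ((hg.continuousOn_interior w hw).continuousAt (isOpen_interior.mem_nhds hw))
  exact ⟨(InnerProductSpace.toDual ℝ E).symm l, by simpa using hl⟩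

theorem Convex.measure_compl_interior_eq_zero {E : Type*} [NormedAddCommGroup E] [NormedSpace ℝ E]
    [FiniteDimensional ℝ E] [MeasurableSpace E] [BorelSpace E] {μ ν : Measure E}
    [ν.IsAddHaarMeasure] (hac : μ ≪ ν) {S : Set E} (hS : Convex ℝ S) (hS0 : μ Sᶜ = 0) :
    μ (interior S)ᶜ = 0 := by
  refine measure_mono_null (fun z hz => ?_) (measure_union_null hS0 (hac (hS.addHaar_frontier ν)))
  by_cases hzS : z ∈ S
  · exact Or.inr ⟨subset_closure hzS, hz⟩
  · exact Or.inl hzS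

section TukeyDepth

variable {E : Type*} [NormedAddCommGroup E] [InnerProductSpace ℝ E] [MeasurableSpace E]

noncomputable def tukeyDepth (μ : Measure E) (u : E) : ENNReal :=
  ⨅ v : Metric.sphere (0 : E) 1, μ {z | 0 ≤ ⟪(v : E), z - u⟫}

theorem tukeyDepth_le_of_ne_zero (μ : Measure E) (u : E) {v : E} (hv : v ≠ 0) :
    tukeyDepth μ u ≤ μ {z | 0 ≤ ⟪v, z - u⟫} := by
  refine iInf_le_of_le ⟨‖v‖⁻¹ • v, by simp [norm_smul, hv]⟩ (le_of_eq (congr_arg μ ?_))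
  ext z
  simp [real_inner_smul_left, mul_nonneg_iff_of_pos_left, hv]

theorem tukeyDepth_le_measure_compl [CompleteSpace E] (μ : Measure E) {U : Set E}
    (hU : IsOpen U) (hUc : Convex ℝ U) (hne : U.Nonempty) {u : E} (hu : u ∉ U) :
    tukeyDepth μ u ≤ μ Uᶜ := by
  obtain ⟨f, hf⟩ := geometric_hahn_banach_open_point hUc hU hu
  set v := (InnerProductSpace.toDual ℝ E).symm f
  have hv : ∀ z, ⟪v, z⟫ = f z := fun z => InnerProductSpace.toDual_symm_apply
  have hv0 : v ≠ 0 := by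
    obtain ⟨a, ha⟩ := hne
    intro h
    simpa [← hv, h] using hf a ha
  refine (tukeyDepth_le_of_ne_zero μ u hv0).trans (measure_mono fun z hz hzU => ?_)
  have : 0 ≤ f z - f u := by simpa [inner_sub_right, hv] using hz
  linarith [hf z hzU]

theorem mem_interior_of_tukeyDepth_pos [FiniteDimensional ℝ E] [BorelSpace E]
    {μ ν : Measure E} [NeZero μ] [ν.IsAddHaarMeasure] (hac : μ ≪ ν) {S : Set E}
    (hS : Convex ℝ S) (hS0 : μ Sᶜ = 0) {u : E} (hu : 0 < tukeyDepth μ u) : u ∈ interior S := by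
  have hint := hS.measure_compl_interior_eq_zero hac hS0
  have hne : (interior S).Nonempty := by
    by_contra hempty
    rw [Set.not_nonempty_iff_eq_empty.mp hempty, Set.compl_empty, Measure.measure_univ_eq_zero]
      at hint
    exact NeZero.ne μ hint
  by_contra hu'
  have hle := tukeyDepth_le_measure_compl μ isOpen_interior hS.interior hne hu'
  rw [hint] at hle
  exact hu.not_ge hle

end TukeyDepth

section ConvexEReal

variable {d : ℕ}

def ConvexEReal (φ : EuclideanSpace ℝ (Fin d) → EReal) : Prop :=
  ∀ x y : EuclideanSpace ℝ (Fin d), ∀ t : ℝ, 0 ≤ t → t ≤ 1 →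
    φ (t • x + (1 - t) • y) ≤ ((t : ℝ) : EReal) * φ x + (((1 - t : ℝ)) : EReal) * φ y

variable {φ : EuclideanSpace ℝ (Fin d) → EReal}

theorem ConvexEReal.convex_setOf_eq_bot (hφ : ConvexEReal φ) : Convex ℝ {z | φ z = ⊥} := by
  intro x (hx : φ x = ⊥) y (hy : φ y = ⊥) a b ha hb hab
  obtain rfl : b = 1 - a := by linarith
  refine le_bot_iff.mp ((hφ x y a ha (by linarith)).trans ?_)
  rw [hx, hy]
  rcases ha.eq_or_lt with rfl | ha
  · simp
  · rw [EReal.coe_mul_bot_of_pos ha, EReal.bot_add]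

theorem ConvexEReal.convexOn_toReal (hφ : ConvexEReal φ) (hbot : ∀ x, φ x ≠ ⊥) :
    ConvexOn ℝ {z | φ z < ⊤} (fun z => (φ z).toReal) := by
  have key : ∀ x ∈ {z | φ z < ⊤}, ∀ y ∈ {z | φ z < ⊤}, ∀ a b : ℝ, 0 ≤ a → 0 ≤ b → a + b = 1 →
      φ (a • x + b • y) ≤ ((a * (φ x).toReal + b * (φ y).toReal : ℝ) : EReal) := by
    intro x hx y hy a b ha hb hab
    obtain rfl : b = 1 - a := by linarith
    rw [EReal.coe_add, EReal.coe_mul, EReal.coe_mul, EReal.coe_toReal hx.ne (hbot x),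
      EReal.coe_toReal hy.ne (hbot y)]
    exact hφ x y a ha (by linarith)
  refine ⟨fun x hx y hy a b ha hb hab => (key x hx y hy a b ha hb hab).trans_lt
    (EReal.coe_lt_top _), fun x hx y hy a b ha hb hab => ?_⟩
  simpa only [smul_eq_mul, EReal.toReal_coe] using
    EReal.toReal_le_toReal (key x hx y hy a b ha hb hab) (hbot _) (EReal.coe_ne_top _)

theorem ConvexEReal.subdiff_nonempty_of_mem_interior (hφ : ConvexEReal φ) (hbot : ∀ x, φ x ≠ ⊥)
    {w : EuclideanSpace ℝ (Fin d)} (hw : w ∈ interior {z | φ z < ⊤}) :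
    (Subdiff φ w).Nonempty := by
  obtain ⟨p, hp⟩ := (hφ.convexOn_toReal hbot).exists_subgradient_of_mem_interior hw
  have hwdom : φ w < ⊤ := interior_subset (s := {z | φ z < ⊤}) hw
  refine ⟨p, fun z => ?_⟩
  rcases (le_top : φ z ≤ ⊤).lt_or_eq with hz | hz
  · rw [← EReal.coe_toReal hwdom.ne (hbot w),
      ← EReal.coe_toReal hz.ne (hbot z), ← EReal.coe_add, EReal.coe_le_coe_iff]
    exact hp z hz
  · exact hz ▸ le_top

theorem subdiff_nonempty_iff_eq_bot {x₀ : EuclideanSpace ℝ (Fin d)} (hx₀ : φ x₀ = ⊥)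
    (w : EuclideanSpace ℝ (Fin d)) : (Subdiff φ w).Nonempty ↔ φ w = ⊥ := by
  refine ⟨fun ⟨p, hp⟩ => ?_, fun hw => ⟨0, fun z => by simp [hw]⟩⟩
  have h := hp x₀
  rw [hx₀, le_bot_iff, EReal.add_eq_bot_iff] at h
  exact h.resolve_right (EReal.coe_ne_bot _)

theorem lt_top_of_subdiff_nonempty {x₁ : EuclideanSpace ℝ (Fin d)} (hx₁ : φ x₁ ≠ ⊤)
    {w : EuclideanSpace ℝ (Fin d)} (hw : (Subdiff φ w).Nonempty) : φ w < ⊤ := by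
  obtain ⟨p, hp⟩ := hw
  refine lt_top_iff_ne_top.mpr fun h => hx₁ (top_le_iff.mp ?_)
  simpa [h] using hp x₁

theorem ConvexEReal.exists_convex_sandwich_domain_subdiff (hφ : ConvexEReal φ) :
    ∃ C : Set (EuclideanSpace ℝ (Fin d)), Convex ℝ C ∧
      {w | (Subdiff φ w).Nonempty} ⊆ C ∧ interior C ⊆ {w | (Subdiff φ w).Nonempty} := by
  by_cases hbot : ∃ x₀, φ x₀ = ⊥
  · obtain ⟨x₀, hx₀⟩ := hbot
    have hdom : {w | (Subdiff φ w).Nonempty} = {z | φ z = ⊥} :=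
      Set.ext (subdiff_nonempty_iff_eq_bot hx₀)
    exact ⟨_, hφ.convex_setOf_eq_bot, hdom.subset, hdom ▸ interior_subset⟩
  push Not at hbot
  by_cases htop : ∃ x₁, φ x₁ ≠ ⊤
  · obtain ⟨x₁, hx₁⟩ := htop
    exact ⟨_, (hφ.convexOn_toReal hbot).1, fun w => lt_top_of_subdiff_nonempty hx₁,
      fun w => hφ.subdiff_nonempty_of_mem_interior hbot⟩
  push Not at htop
  exact ⟨Set.univ, convex_univ, Set.subset_univ _,
    fun w _ => ⟨0, fun z => by simp [htop w, htop z]⟩⟩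

end ConvexEReal

theorem tukeyDepth_pos_mem_interior_domain_subdiff_general {d : ℕ}
    (μ : Measure (EuclideanSpace ℝ (Fin d)))
    [IsProbabilityMeasure μ]
    (hac : μ ≪ volume)
    (φ : EuclideanSpace ℝ (Fin d) → EReal)
    (hconv : ∀ x y : EuclideanSpace ℝ (Fin d), ∀ t : ℝ, 0 ≤ t → t ≤ 1 →
      φ (t • x + (1 - t) • y) ≤ ((t : ℝ) : EReal) * φ x + (((1 - t : ℝ)) : EReal) * φ y)
    (T : EuclideanSpace ℝ (Fin d) → EuclideanSpace ℝ (Fin d))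
    (hgrad : ∀ᵐ u ∂μ, T u ∈ Subdiff φ u)
    (u : EuclideanSpace ℝ (Fin d))
    (hTD : 0 < ⨅ v : Metric.sphere (0 : EuclideanSpace ℝ (Fin d)) 1,
        μ {z | 0 ≤ ⟪(v : EuclideanSpace ℝ (Fin d)), z - u⟫}) :
    u ∈ interior {w | (Subdiff φ w).Nonempty} := by
  obtain ⟨C, hC, hdomC, hCdom⟩ := ConvexEReal.exists_convex_sandwich_domain_subdiff hconv
  have hnull : μ Cᶜ = 0 :=
    measure_mono_null (fun w hw hT => hw (hdomC ⟨T w, hT⟩)) (ae_iff.mp hgrad)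
  exact interior_maximal hCdom isOpen_interior (mem_interior_of_tukeyDepth_pos hac hC hnull hTD)

/-- If the gradient of a l.s.c. convex function `φ` pushes `μ` (absolutely continuous) forward
to `P`, then every point of strictly positive Tukey depth w.r.t. `μ` lies in the interior of the
domain of `∂φ`. -/
theorem tukeyDepth_pos_mem_interior_domain_subdiff {d : ℕ}
    (μ P : Measure (EuclideanSpace ℝ (Fin d)))
    [IsProbabilityMeasure μ] [IsProbabilityMeasure P]
    (hac : μ ≪ volume)
    (φ : EuclideanSpace ℝ (Fin d) → EReal)
    (hlsc : LowerSemicontinuous φ)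
    (hconv : ∀ x y : EuclideanSpace ℝ (Fin d), ∀ t : ℝ, 0 ≤ t → t ≤ 1 →
      φ (t • x + (1 - t) • y) ≤ ((t : ℝ) : EReal) * φ x + (((1 - t : ℝ)) : EReal) * φ y)
    (T : EuclideanSpace ℝ (Fin d) → EuclideanSpace ℝ (Fin d)) (hTmeas : Measurable T)
    (hgrad : ∀ᵐ u ∂μ, T u ∈ Subdiff φ u)
    (hpush : μ.map T = P)
    (u : EuclideanSpace ℝ (Fin d))
    (hTD : 0 < ⨅ v : Metric.sphere (0 : EuclideanSpace ℝ (Fin d)) 1,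
        μ {z | 0 ≤ ⟪(v : EuclideanSpace ℝ (Fin d)), z - u⟫}) :
    u ∈ interior {w | (Subdiff φ w).Nonempty} :=
  tukeyDepth_pos_mem_interior_domain_subdiff_general μ hac φ hconv T hgrad u hTD
end

section
/- Let μ be absolutely continuous with respect to Lebesgue measure on ℝ^d and u ∈ ℝ^d. Then the map v ↦ μ({y : ⟨v, y − u⟩ ≥ 0}) is continuous on the unit sphere S^{d−1}, and the infimum defining TD(u; μ) is attained: there exists v_u ∈ S^{d−1} with μ({y : ⟨v_u, y − u⟩ ≥ 0}) = TD(u; μ). -/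
/-!
As `w → v`, the indicator of `{y | 0 ≤ ⟪w, y - u⟫}` converges to that of `{y | 0 ≤ ⟪v, y - u⟫}`
at every `y` off the hyperplane `⟪v, y - u⟫ = 0`. For `v ≠ 0` this hyperplane is Lebesgue-null,
hence `μ`-null, so the halfspace masses converge by dominated convergence. A continuous function
on the compact unit sphere attains its infimum.
-/

open scoped RealInnerProductSpace
open MeasureTheory Filter Topology

section Halfspace

variable {E : Type*} [NormedAddCommGroup E] [InnerProductSpace ℝ E] [MeasurableSpace E]
  [BorelSpace E]

lemma measurableSet_halfspace (v u : E) : MeasurableSet {y : E | 0 ≤ ⟪v, y - u⟫} :=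
  measurableSet_le measurable_const (by fun_prop)

lemma measure_hyperplane_eq_zero [FiniteDimensional ℝ E] {μ ν : Measure E}
    [ν.IsAddHaarMeasure] (hμν : μ ≪ ν) {v : E} (hv : v ≠ 0) (u : E) :
    μ {y : E | ⟪v, y - u⟫ = 0} = 0 := by
  apply hμν
  have hdir : (ℝ ∙ v)ᗮ ≠ ⊤ := fun htop ↦
    hv <| inner_self_eq_zero.mp <| Submodule.mem_orthogonal_singleton_iff_inner_right.mp
      (htop ▸ Submodule.mem_top)
  have hne : AffineSubspace.mk' u (ℝ ∙ v)ᗮ ≠ ⊤ := fun htop ↦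
    hdir (by rw [← AffineSubspace.direction_mk' u (ℝ ∙ v)ᗮ, htop, AffineSubspace.direction_top])
  convert Measure.addHaar_affineSubspace ν _ hne using 2
  ext y
  simp [AffineSubspace.mem_mk', Submodule.mem_orthogonal_singleton_iff_inner_right]

lemma eventually_nonneg_iff_of_ne_zero {X : Type*} [TopologicalSpace X] {f : X → ℝ} {x : X}
    (hf : ContinuousAt f x) (hx : f x ≠ 0) : ∀ᶠ x' in 𝓝 x, 0 ≤ f x' ↔ 0 ≤ f x := by
  rcases hx.lt_or_gt with hneg | hpos
  · filter_upwards [hf.eventually (eventually_lt_nhds hneg)] with x' hx'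
    simp only [not_le.mpr hx', not_le.mpr hneg]
  · filter_upwards [hf.eventually (eventually_gt_nhds hpos)] with x' hx'
    simp only [hx'.le, hpos.le]

lemma continuousAt_measure_halfspace {μ : Measure E} [IsFiniteMeasure μ] {v : E} (u : E)
    (hv : μ {y : E | ⟪v, y - u⟫ = 0} = 0) :
    ContinuousAt (fun w : E ↦ μ {y : E | 0 ≤ ⟪w, y - u⟫}) v := by
  refine tendsto_measure_of_ae_tendsto_indicator_of_isFiniteMeasure (𝓝 v)
    (measurableSet_halfspace v u) (fun w ↦ measurableSet_halfspace w u) ?_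
  filter_upwards [measure_eq_zero_iff_ae_notMem.mp hv] with y hy
  exact eventually_nonneg_iff_of_ne_zero (by fun_prop) hy

lemma continuousOn_measure_halfspace [FiniteDimensional ℝ E] {μ ν : Measure E}
    [IsFiniteMeasure μ] [ν.IsAddHaarMeasure] (hμν : μ ≪ ν) (u : E) :
    ContinuousOn (fun v : E ↦ μ {y : E | 0 ≤ ⟪v, y - u⟫}) {0}ᶜ := fun _ hv ↦
  (continuousAt_measure_halfspace u (measure_hyperplane_eq_zero hμν hv u)).continuousWithinAt

end Halfspace

/-- For an absolutely continuous probability measure, the halfspace-mass function is continuous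
on the unit sphere and the Tukey depth infimum is attained. -/
theorem halfspace_mass_continuous_and_tukeyDepth_attained {d : ℕ} (hd : 0 < d)
    (μ : Measure (EuclideanSpace ℝ (Fin d))) [IsProbabilityMeasure μ]
    (hac : μ ≪ volume) (u : EuclideanSpace ℝ (Fin d)) :
    Continuous (fun v : Metric.sphere (0 : EuclideanSpace ℝ (Fin d)) 1 =>
      μ {y | 0 ≤ ⟪(v : EuclideanSpace ℝ (Fin d)), y - u⟫}) ∧
    ∃ v₀ : Metric.sphere (0 : EuclideanSpace ℝ (Fin d)) 1,
      μ {y | 0 ≤ ⟪(v₀ : EuclideanSpace ℝ (Fin d)), y - u⟫}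
        = ⨅ v : Metric.sphere (0 : EuclideanSpace ℝ (Fin d)) 1,
            μ {y | 0 ≤ ⟪(v : EuclideanSpace ℝ (Fin d)), y - u⟫} := by
  have hcont := (continuousOn_measure_halfspace hac u).mono
    (fun v hv ↦ ne_zero_of_mem_sphere one_ne_zero ⟨v, hv⟩)
  have : Nonempty (Fin d) := ⟨⟨0, hd⟩⟩
  obtain ⟨v₀, hv₀, hmin⟩ := (isCompact_sphere (0 : EuclideanSpace ℝ (Fin d)) 1).exists_isMinOn
    (NormedSpace.sphere_nonempty.mpr zero_le_one) hcont
  exact ⟨hcont.domRestrict, ⟨v₀, hv₀⟩, (hmin.iInf_eq hv₀).symm⟩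
end
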